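/- arXiv:1109.1346 — 3 statements merged into one kernel-verified Lean document; each statement's English description precedes it below -/
import Mathlib

section
/- Let λ be a partition of length l and let λ^{(i)} be the partition obtained from the code of λ by changing the i-th R from the left into a U. Then λ^{(i)} = (λ₁ - 1, …, λ_j - 1, i - 1, λ_{j+1}, …, λ_l), where j is determined by λ_j ≥ i > λ_{j+1} (with λ₀ = ∞, λ_{l+1} = 0). -/
/-- let λ be a partition (0-indexed: `p a = λ_{a+1}`) with code
c(k) = U iff k = λ_a - a, let r be the position of the i-th R from the left
(i.e. c r = R and exactly i-1 R's lie strictly left of r), and let j satisfy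
λ_j ≥ i > λ_{j+1}.  Then the partition λ^{(i)} obtained from the code of λ by
changing the i-th R from the left into a U equals
(λ₁ - 1, …, λ_j - 1, i - 1, λ_{j+1}, …, λ_l): its code is, up to the forced
reanchoring shift by one, the code of λ with position r turned into a U. -/
theorem stmt_14 (p : ℕ → ℕ) (hp : Antitone p) (hfin : ∃ N, ∀ i ≥ N, p i = 0)
    (i : ℕ) (hi : 1 ≤ i) (r : ℤ)
    (hrR : ¬ ∃ a : ℕ, r = (p a : ℤ) - ((a : ℤ) + 1))
    (hrith : Set.ncard {k : ℤ | k < r ∧ ¬ ∃ a : ℕ, k = (p a : ℤ) - ((a : ℤ) + 1)} = i - 1)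
    (j : ℕ) (hup : j = 0 ∨ i ≤ p (j - 1)) (hlow : p j < i) :
    ∀ k : ℤ,
      (∃ a : ℕ, k =
          (((if a < j then p a - 1 else if a = j then i - 1 else p (a - 1)) : ℕ) : ℤ)
            - ((a : ℤ) + 1)) ↔
      (k + 1 = r ∨ ∃ a : ℕ, k + 1 = (p a : ℤ) - ((a : ℤ) + 1)) := by
  obtain ⟨N0, hN0⟩ := hfin
  set g : ℕ → ℤ := fun a => (p a : ℤ) - ((a : ℤ) + 1) with hg
  set N : ℕ := max N0 j with hN
  have hNj : j ≤ N := le_max_right _ _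
  have hpN : ∀ a, N ≤ a → p a = 0 := fun a ha => hN0 a (le_trans (le_max_left _ _) ha)
  have hpa_big : ∀ a, a < j → i ≤ p a := by
    intro a ha
    rcases hup with h0 | hle
    · omega
    · exact le_trans hle (hp (by omega))
  have hpa_small : ∀ a, j ≤ a → p a < i := fun a ha => lt_of_le_of_lt (hp ha) hlow
  set m : ℤ := (i : ℤ) - 1 - j with hm
  -- every integer below -N is a U position
  have hA : ∀ t : ℤ, t < -(N : ℤ) → ∃ a : ℕ, t = (p a : ℤ) - ((a : ℤ) + 1) := by
    intro t ht
    refine ⟨(-t - 1).toNat, ?_⟩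
    have h1 : ((-t - 1).toNat : ℤ) = -t - 1 := Int.toNat_of_nonneg (by omega)
    have h2 : p (-t - 1).toNat = 0 := hpN _ (by omega)
    omega
  -- characterization of U positions in [-N, m)
  have hB : ∀ a : ℕ, (-(N : ℤ) ≤ g a ∧ g a < m) ↔ (j ≤ a ∧ a < N) := by
    intro a
    simp only [hg]
    constructor
    · rintro ⟨h1, h2⟩
      constructor
      · by_contra hc
        have := hpa_big a (by omega)
        omega
      · by_contra hc
        have := hpN a (by omega)
        omega
    · rintro ⟨h1, h2⟩
      have := hpa_small a h1
      omega
  have hginj : Function.Injective g := by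
    have hanti : StrictAnti g := by
      intro a b hab
      have := hp hab.le
      simp only [hg]
      omega
    exact hanti.injective
  -- the R positions below m as a Finset
  have hSm : {k : ℤ | k < m ∧ ¬ ∃ a : ℕ, k = (p a : ℤ) - ((a : ℤ) + 1)}
      = ↑(Finset.Ico (-(N : ℤ)) m \ (Finset.Ico j N).image g) := by
    ext t
    simp only [Set.mem_setOf_eq, Finset.coe_sdiff, Finset.coe_Ico, Set.mem_diff,
      Set.mem_Ico, Finset.mem_coe, Finset.mem_image, Finset.mem_Ico]
    constructor
    · rintro ⟨h1, h2⟩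
      refine ⟨⟨?_, h1⟩, ?_⟩
      · by_contra hc
        exact h2 (hA t (by omega))
      · rintro ⟨a, ha1, ha2⟩
        exact h2 ⟨a, by simp only [hg] at ha2; omega⟩
    · rintro ⟨⟨h1, h2⟩, h3⟩
      refine ⟨h2, ?_⟩
      rintro ⟨a, ha⟩
      have hmem : j ≤ a ∧ a < N := (hB a).1 (by simp only [hg]; omega)
      exact h3 ⟨a, hmem, by simp only [hg]; omega⟩
  have hcard_m : Set.ncard {k : ℤ | k < m ∧ ¬ ∃ a : ℕ, k = (p a : ℤ) - ((a : ℤ) + 1)}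
      = i - 1 := by
    rw [hSm, Set.ncard_coe_finset, Finset.card_sdiff_of_subset, Finset.card_image_of_injective _ hginj,
      Int.card_Ico, Nat.card_Ico]
    · omega
    · intro t ht
      simp only [Finset.mem_image, Finset.mem_Ico] at ht
      obtain ⟨a, ha, rfl⟩ := ht
      simp only [Finset.mem_Ico]
      exact (hB a).2 ha
  -- finiteness of R positions below any bound
  have hSfin : ∀ x : ℤ,
      ({k : ℤ | k < x ∧ ¬ ∃ a : ℕ, k = (p a : ℤ) - ((a : ℤ) + 1)}).Finite := by
    intro x
    apply Set.Finite.subset (Set.finite_Ico (-(N : ℤ)) x)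
    rintro t ⟨h1, h2⟩
    refine ⟨?_, h1⟩
    by_contra hc
    exact h2 (hA t (by omega))
  have hmnotU : ¬ ∃ a : ℕ, m = (p a : ℤ) - ((a : ℤ) + 1) := by
    rintro ⟨a, ha⟩
    rcases le_or_gt j a with h | h
    · have := hpa_small a h; omega
    · have := hpa_big a h; omega
  -- r = m by uniqueness of the i-th R
  have hrm : r = m := by
    rcases lt_trichotomy r m with h | h | h
    · exfalso
      have hsub : insert r {k : ℤ | k < r ∧ ¬ ∃ a : ℕ, k = (p a : ℤ) - ((a : ℤ) + 1)}
          ⊆ {k : ℤ | k < m ∧ ¬ ∃ a : ℕ, k = (p a : ℤ) - ((a : ℤ) + 1)} := by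
        rintro t (rfl | ⟨h1, h2⟩)
        · exact ⟨h, hrR⟩
        · exact ⟨by omega, h2⟩
      have h1 := Set.ncard_le_ncard hsub (hSfin m)
      rw [Set.ncard_insert_of_notMem (fun hc => absurd hc.1 (lt_irrefl r)) (hSfin r),
        hrith, hcard_m] at h1
      omega
    · exact h
    · exfalso
      have hsub : insert m {k : ℤ | k < m ∧ ¬ ∃ a : ℕ, k = (p a : ℤ) - ((a : ℤ) + 1)}
          ⊆ {k : ℤ | k < r ∧ ¬ ∃ a : ℕ, k = (p a : ℤ) - ((a : ℤ) + 1)} := by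
        rintro t (rfl | ⟨h1, h2⟩)
        · exact ⟨h, hmnotU⟩
        · exact ⟨by omega, h2⟩
      have h1 := Set.ncard_le_ncard hsub (hSfin r)
      rw [Set.ncard_insert_of_notMem (fun hc => absurd hc.1 (lt_irrefl m)) (hSfin m),
        hrith, hcard_m] at h1
      omega
  subst hrm
  intro k
  constructor
  · rintro ⟨a, hk⟩
    rcases lt_trichotomy a j with h | h | h
    · right
      have h1 : i ≤ p a := hpa_big a h
      rw [if_pos h] at hk
      exact ⟨a, by omega⟩
    · left
      subst h
      rw [if_neg (lt_irrefl a), if_pos rfl] at hk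
      omega
    · right
      rw [if_neg (by omega), if_neg (by omega)] at hk
      exact ⟨a - 1, by omega⟩
  · rintro (hk | ⟨b, hk⟩)
    · refine ⟨j, ?_⟩
      rw [if_neg (lt_irrefl j), if_pos rfl]
      omega
    · rcases lt_or_ge b j with h | h
      · have h1 : i ≤ p b := hpa_big b h
        refine ⟨b, ?_⟩
        rw [if_pos h]
        omega
      · refine ⟨b + 1, ?_⟩
        rw [if_neg (by omega), if_neg (by omega)]
        simp only [Nat.add_sub_cancel]
        omega
end

section
/- Let B_n be the Bernstein operators on the ring of symmetric functions, satisfying B_n B_m = -B_{m-1} B_{n+1} and B_λ · 1 = s_λ for partitions λ. Then for a partition λ of length l and integer n, B_n(s_λ) = 0 if and only if n = λ_j - j for some j ∈ {1, …, l} or n < -l. -/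
/-!
Commuting `B n` past `B m` costs a sign and turns the indices `(n, m)` into `(m - 1, n + 1)`, so
pushing `B n` to the right through `B λ₁ ⋯ B λ_l` lowers every index it passes by one and raises
its own by one. If `n = λ_j - j`, after `j - 1` steps it meets `B λ_j` as `B (λ_j - 1) B λ_j`,
which the relation makes equal to its own negative, hence zero; if `n < -l` it reaches `1` with a
negative index. Otherwise stop at the first `j` with `n + j ≥ λ_{j+1}` (or at the end): the
indices now form a weakly decreasing sequence of non-negative integers, so up to sign `B n s_λ` is
a Schur function (trailing factors `B 0` act trivially on `1`), and these are non-zero.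
-/

def IsBernsteinFamily {A : Type*} [Ring A] (B : ℤ → A) : Prop :=
  ∀ n m : ℤ, B n * B m = -(B (m - 1) * B (n + 1))

section Module

variable {R M : Type*} [Semiring R] [AddCommGroup M] [Module R M] {B : ℤ → Module.End R M}
  {one : M}

theorem prod_map_apply_ne_zero_of_pos
    (hnz : ∀ (k : ℕ) (q : Fin k → ℕ), Antitone q → (∀ a, 1 ≤ q a) →
      (List.ofFn (fun a => B ((q a : ℤ)))).prod one ≠ 0)
    (L : List ℤ) (hL : L.SortedGE) (hpos : ∀ a ∈ L, 0 < a) : (L.map B).prod one ≠ 0 := by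
  have hpos' (i : Fin L.length) : 0 < L.get i := hpos _ (L.get_mem i)
  convert hnz L.length (fun i => (L.get i).toNat) (fun i j hij => Int.toNat_le_toNat (hL hij))
    (fun i => by have := hpos' i; omega) using 3
  conv_lhs => rw [← List.ofFn_get L, List.map_ofFn]
  congr 1
  funext i
  rw [Function.comp_apply, Int.toNat_of_nonneg (hpos' i).le]

theorem prod_map_apply_ne_zero_of_nonneg (hzero : B 0 one = one)
    (hnz : ∀ (k : ℕ) (q : Fin k → ℕ), Antitone q → (∀ a, 1 ≤ q a) →
      (List.ofFn (fun a => B ((q a : ℤ)))).prod one ≠ 0)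
    (L : List ℤ) (hL : L.SortedGE) (hnn : ∀ a ∈ L, 0 ≤ a) : (L.map B).prod one ≠ 0 := by
  induction L using List.reverseRecOn with
  | nil => simpa using hnz 0 finZeroElim (fun a => a.elim0) (fun a => a.elim0)
  | append_singleton L a ih =>
    have hL' := List.sortedGE_iff_pairwise.mp hL
    rw [List.pairwise_append] at hL'
    rcases (hnn a (by simp)).eq_or_lt with ha | ha
    · subst ha
      simpa [hzero] using ih hL'.1.sortedGE (fun b hb => hnn b (by simp [hb]))
    · refine prod_map_apply_ne_zero_of_pos hnz _ hL fun b hb => ?_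
      rcases List.mem_append.mp hb with hb | hb
      · exact ha.trans_le (hL'.2.2 b hb a (by simp))
      · rwa [List.mem_singleton.mp hb]

end Module

namespace IsBernsteinFamily

section Ring

variable {A : Type*} [Ring A] {B : ℤ → A}

theorem mul_succ_eq_zero [IsAddTorsionFree A] (hB : IsBernsteinFamily B) (m : ℤ) :
    B m * B (m + 1) = 0 := by
  have h := hB m (m + 1)
  rwa [add_sub_cancel_right, self_eq_neg] at h

theorem mul_prod_cons (hB : IsBernsteinFamily B) (n a : ℤ) (L : List ℤ) :
    B n * ((a :: L).map B).prod = -(B (a - 1) * (B (n + 1) * (L.map B).prod)) := by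
  rw [List.map_cons, List.prod_cons, ← mul_assoc, hB, neg_mul, mul_assoc]

theorem mul_prod_eq_zero [IsAddTorsionFree A] (hB : IsBernsteinFamily B) :
    ∀ (L : List ℤ) (n : ℤ) (j : ℕ) (hj : j < L.length), n = L[j] - (j + 1) →
      B n * (L.map B).prod = 0
  | a :: L, n, 0, _, hn => by
    have hn : n = a - 1 := by simpa using hn
    rw [List.map_cons, List.prod_cons, ← mul_assoc, hn, ← sub_add_cancel a 1,
      add_sub_cancel_right, hB.mul_succ_eq_zero, zero_mul]
  | a :: L, n, j + 1, hj, hn => by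
    have hj' : j < L.length := by simpa using hj
    have hn' : n + 1 = L[j] - (j + 1) := by
      rw [hn, List.getElem_cons_succ]
      push_cast
      ring
    rw [hB.mul_prod_cons, mul_prod_eq_zero hB L (n + 1) j hj' hn', mul_zero, neg_zero]

/-- The bound `c` is the invariant that keeps `(a - 1) :: L'` sorted in the inductive step. -/
theorem exists_mul_prod_eq_neg_one_pow_mul (hB : IsBernsteinFamily B) :
    ∀ (L : List ℤ) (n c : ℤ), L.SortedGE → (∀ a ∈ L, 0 < a ∧ a ≤ c + 1) → n ≤ c →
      -(L.length : ℤ) ≤ n → (∀ (j : ℕ) (hj : j < L.length), n ≠ L[j] - (j + 1)) →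
      ∃ (L' : List ℤ) (k : ℕ), L'.SortedGE ∧ (∀ a ∈ L', 0 ≤ a ∧ a ≤ c) ∧
        B n * (L.map B).prod = (-1) ^ k * (L'.map B).prod
  | [], n, c, _, _, hnc, hn, _ =>
    ⟨[n], 0, (List.pairwise_singleton _ n).sortedGE, by simpa using ⟨hn, hnc⟩, by simp⟩
  | a :: L, n, c, hs, hb, hnc, hn, hne => by
    have hs' := List.sortedGE_iff_pairwise.mp hs
    rw [List.pairwise_cons] at hs'
    obtain ⟨ha, hbL⟩ := List.forall_mem_cons.mp hb
    have hna : n ≠ a - 1 := fun h => hne 0 (by simp) (by rw [h]; rfl)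
    rcases le_or_gt a n with han | han
    · refine ⟨n :: a :: L, 0, ?_, ?_, by simp⟩
      · refine List.Pairwise.sortedGE (List.pairwise_cons.mpr ⟨?_, hs.pairwise⟩)
        exact List.forall_mem_cons.mpr ⟨han, fun b hb => (hs'.1 b hb).trans han⟩
      · simp only [List.forall_mem_cons]
        exact ⟨⟨by omega, hnc⟩, ⟨ha.1.le, by omega⟩,
          fun b hb => ⟨(hbL b hb).1.le, by linarith [hs'.1 b hb]⟩⟩
    · obtain ⟨L', k, hsL', hbL', heq⟩ :=
        exists_mul_prod_eq_neg_one_pow_mul hB L (n + 1) (a - 1) hs'.2.sortedGE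
          (fun b hb => ⟨(hbL b hb).1, by linarith [hs'.1 b hb]⟩) (by omega)
          (by rw [List.length_cons] at hn; omega) (fun j hj => by
            have := hne (j + 1) (by simpa using hj)
            simp only [List.getElem_cons_succ] at this
            push_cast at this
            omega)
      refine ⟨(a - 1) :: L', k + 1, ?_, ?_, ?_⟩
      · exact List.Pairwise.sortedGE (List.pairwise_cons.mpr
          ⟨fun b hb => (hbL' b hb).2, hsL'.pairwise⟩)
      · simp only [List.forall_mem_cons]
        exact ⟨⟨by omega, by omega⟩,
          fun b hb => ⟨(hbL' b hb).1, by linarith [(hbL' b hb).2]⟩⟩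
      · rw [hB.mul_prod_cons, heq, ← ((Commute.neg_one_left _).pow_left k).left_comm,
          List.map_cons, List.prod_cons, pow_succ, mul_neg_one, neg_mul]

end Ring

section Module

variable {R M : Type*} [Semiring R] [AddCommGroup M] [Module R M] {B : ℤ → Module.End R M}
  {one : M}

theorem prod_map_apply_eq_zero_of_lt (hB : IsBernsteinFamily B)
    (hneg : ∀ m : ℤ, m < 0 → B m one = 0) :
    ∀ (L : List ℤ) (n : ℤ), n < -(L.length : ℤ) → B n ((L.map B).prod one) = 0
  | [], n, hn => by simpa using hneg n (by simpa using hn)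
  | a :: L, n, hn => by
    have hIH := prod_map_apply_eq_zero_of_lt hB hneg L (n + 1)
      (by rw [List.length_cons] at hn; omega)
    rw [← Module.End.mul_apply, hB.mul_prod_cons, LinearMap.neg_apply, Module.End.mul_apply,
      Module.End.mul_apply, hIH, map_zero, neg_zero]

theorem prod_map_apply_eq_zero_iff [IsAddTorsionFree (Module.End R M)]
    (hB : IsBernsteinFamily B)
    (hneg : ∀ m : ℤ, m < 0 → B m one = 0) (hzero : B 0 one = one)
    (hnz : ∀ (k : ℕ) (q : Fin k → ℕ), Antitone q → (∀ a, 1 ≤ q a) →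
      (List.ofFn (fun a => B ((q a : ℤ)))).prod one ≠ 0)
    (L : List ℤ) (hL : L.SortedGE) (hpos : ∀ a ∈ L, 0 < a) (n : ℤ) :
    B n ((L.map B).prod one) = 0 ↔
      (∃ (j : ℕ) (hj : j < L.length), n = L[j] - (j + 1)) ∨ n < -(L.length : ℤ) := by
  refine ⟨fun h => ?_, ?_⟩
  · by_contra! ⟨hne, hn⟩
    have hbound (a : ℤ) (ha : a ∈ L) : 0 < a ∧ a ≤ max n L.sum + 1 := by
      have := List.single_le_sum (fun b hb => (hpos b hb).le) a ha
      exact ⟨hpos a ha, by omega⟩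
    obtain ⟨L', k, hsL', hbL', heq⟩ :=
      hB.exists_mul_prod_eq_neg_one_pow_mul L n _ hL hbound (le_max_left _ _) hn hne
    rw [← Module.End.mul_apply, heq] at h
    refine prod_map_apply_ne_zero_of_nonneg hzero hnz L' hsL' (fun a ha => (hbL' a ha).1) ?_
    rcases neg_one_pow_eq_or (Module.End R M) k with hk | hk <;> simpa [hk] using h
  · rintro (⟨j, hj, hn⟩ | hn)
    · rw [← Module.End.mul_apply, hB.mul_prod_eq_zero L n j hj hn, LinearMap.zero_apply]
    · exact hB.prod_map_apply_eq_zero_of_lt hneg L n hn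

end Module

end IsBernsteinFamily

/-- let B_n be the Bernstein operators, i.e. operators on the space of
symmetric functions satisfying B_n B_m = -B_{m-1} B_{n+1}, B_{-m}·1 = 0 for m > 0,
B_0·1 = 1, and s_λ = B_{λ₁} ⋯ B_{λ_l}·1 (a nonzero Schur function) for every
partition λ.  Then for a partition λ of length l and an integer n,
B_n(s_λ) = 0 iff n = λ_j - j for some j ∈ {1, …, l} or n < -l. -/
theorem stmt_15 {M : Type*} [AddCommGroup M] [Module ℂ M]
    (B : ℤ → Module.End ℂ M) (one : M)
    (hrel : ∀ n m : ℤ, B n * B m = -(B (m - 1) * B (n + 1)))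
    (hneg : ∀ m : ℤ, m < 0 → B m one = 0)
    (hzero : B 0 one = one)
    (hnz : ∀ (k : ℕ) (q : Fin k → ℕ), Antitone q → (∀ a, 1 ≤ q a) →
      (List.ofFn (fun a => B ((q a : ℤ)))).prod one ≠ 0)
    (l : ℕ) (p : Fin l → ℕ) (hp : Antitone p) (hpos : ∀ a, 1 ≤ p a) (n : ℤ) :
    B n ((List.ofFn (fun a => B ((p a : ℤ)))).prod one) = 0 ↔
      (∃ j : Fin l, n = (p j : ℤ) - ((j : ℤ) + 1)) ∨ n < -(l : ℤ) := by
  have : IsAddTorsionFree (Module.End ℂ M) := .of_isTorsionFree ℂ _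
  have hL : (List.ofFn fun a => (p a : ℤ)).SortedGE :=
    List.sortedGE_ofFn_iff.mpr (Nat.mono_cast.comp_antitone hp)
  have hLpos : ∀ a ∈ List.ofFn fun a => (p a : ℤ), 0 < a := by
    simpa [List.mem_ofFn, Nat.one_le_iff_ne_zero, Nat.pos_iff_ne_zero] using hpos
  rw [List.ofFn_comp' _ B,
    IsBernsteinFamily.prod_map_apply_eq_zero_iff hrel hneg hzero hnz _ hL hLpos]
  simp [Fin.exists_iff]
end

section
/- Let B_n satisfy B_n B_m = -B_{m-1} B_{n+1}, and let λ be a partition of length l. For an integer n with λ_{j+1} - j ≤ n ≤ λ_j - j - 1 for some j ∈ {0, …, l} (conventions λ₀ = ∞, λ_{l+1} = 0), one has B_n B_{λ₁} ⋯ B_{λ_l} = (-1)^j B_{ν₁} ⋯ B_{ν_{l+1}}, where ν = (λ₁ - 1, …, λ_j - 1, n + j, λ_{j+1}, …, λ_l) = λ^{(n+j+1)} is a partition. -/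
/-!
Moving `B_n` rightwards past `B_{λ₁}, …, B_{λ_j}` with `B_n B_m = -B_{m-1} B_{n+1}` lowers each of
these indices by one, raises `n` to `n + j` and costs a sign `(-1)^j`. The bounds on `n` say exactly
that `λ_{j+1} ≤ n + j < λ_j`, which is what makes the resulting index sequence a partition.
-/

/-- With `λ` padded by zeros, `shiftInsert λ j m` is the paper's `λ^{(m+1)}`, indexed from `0`. -/
def shiftInsert (q : ℕ → ℤ) (j : ℕ) (m : ℤ) (a : ℕ) : ℤ :=
  if a < j then q a - 1 else if a = j then m else q (a - 1)

theorem shiftInsert_antitone {q : ℕ → ℤ} (hq : Antitone q) {j : ℕ} {m : ℤ}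
    (hlow : q j ≤ m) (hup : 0 < j → m ≤ q (j - 1) - 1) : Antitone (shiftInsert q j m) := by
  refine antitone_nat_of_succ_le fun a => ?_
  unfold shiftInsert
  rcases lt_trichotomy (a + 1) j with h | rfl | h
  · simpa [h, Nat.lt_of_succ_lt h] using hq a.le_succ
  · simpa using hup a.succ_pos
  · rcases (Nat.lt_succ_iff.mp h).eq_or_lt with rfl | h'
    · simpa using hlow
    · simpa [h.not_gt, h.ne', h'.not_gt, h'.ne'] using hq (Nat.sub_le a 1)

theorem shiftInsert_nonneg {q : ℕ → ℤ} (hq : ∀ a, 0 ≤ q a) {j : ℕ} {m : ℤ}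
    (hanti : Antitone (shiftInsert q j m)) (a : ℕ) : 0 ≤ shiftInsert q j m a := by
  calc 0 ≤ q (max a j) := hq _
    _ = shiftInsert q j m (max a j + 1) := by
      rw [shiftInsert, if_neg (by omega), if_neg (by omega), Nat.add_sub_cancel]
    _ ≤ shiftInsert q j m a := hanti (by omega)

def extendByZero {l : ℕ} (p : Fin l → ℕ) (i : ℕ) : ℤ :=
  if h : i < l then p ⟨i, h⟩ else 0

theorem extendByZero_of_lt {l : ℕ} (p : Fin l → ℕ) {i : ℕ} (h : i < l) :
    extendByZero p i = p ⟨i, h⟩ :=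
  dif_pos h

theorem extendByZero_nonneg {l : ℕ} (p : Fin l → ℕ) (i : ℕ) : 0 ≤ extendByZero p i := by
  unfold extendByZero; split_ifs <;> positivity

theorem extendByZero_antitone {l : ℕ} {p : Fin l → ℕ} (hp : Antitone p) :
    Antitone (extendByZero p) := by
  intro i k hik
  unfold extendByZero
  split_ifs with hk hi
  · exact_mod_cast hp (show (⟨i, hi⟩ : Fin l) ≤ ⟨k, hk⟩ from hik)
  · omega
  · positivity
  · rfl

theorem List.ofFn_coe_eq_map_range {α : Type*} (n : ℕ) (f : ℕ → α) :
    List.ofFn (fun a : Fin n => f a) = (List.range n).map f := by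
  rw [List.ofFn_eq_map, ← List.map_coe_finRange_eq_range, List.map_map]
  rfl

section Bernstein

variable {R : Type*} [Ring R] {B : ℤ → R}

theorem bernstein_mul_prod_range (hrel : ∀ n m : ℤ, B n * B m = -(B (m - 1) * B (n + 1)))
    (q : ℕ → ℤ) (n : ℤ) (j : ℕ) :
    B n * ((List.range j).map fun a => B (q a)).prod =
      (-1) ^ j * ((List.range j).map fun a => B (q a - 1)).prod * B (n + j) := by
  induction j with
  | zero => simp
  | succ j ih =>
    rw [List.prod_range_succ, List.prod_range_succ, ← mul_assoc, ih, mul_assoc _ (B (n + j)),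
      hrel, pow_succ]
    push_cast
    rw [add_assoc]
    noncomm_ring

theorem bernstein_mul_prod_shiftInsert (hrel : ∀ n m : ℤ, B n * B m = -(B (m - 1) * B (n + 1)))
    (q : ℕ → ℤ) {j l : ℕ} (hj : j ≤ l) (n : ℤ) :
    B n * ((List.range l).map fun a => B (q a)).prod =
      (-1) ^ j * ((List.range (l + 1)).map fun a => B (shiftInsert q j (n + j) a)).prod := by
  obtain ⟨k, rfl⟩ := Nat.exists_eq_add_of_le hj
  have hhead : (List.range j).map (fun a => B (shiftInsert q j (n + j) a)) =
      (List.range j).map fun a => B (q a - 1) :=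
    List.map_congr_left fun a ha => by simp [shiftInsert, List.mem_range.mp ha]
  have htail : (List.range k).map (fun a => B (shiftInsert q j (n + j) (j + (a + 1)))) =
      (List.range k).map (fun a => B (q (j + a))) :=
    List.map_congr_left fun a _ => by simp [shiftInsert]
  rw [add_assoc, List.range_add, List.range_add, List.range_succ_eq_map]
  simp only [List.map_append, List.map_cons, List.map_map, List.prod_append, List.prod_cons,
    Function.comp_def, Nat.succ_eq_add_one]
  rw [← mul_assoc, bernstein_mul_prod_range hrel, hhead, htail]
  simp [shiftInsert, mul_assoc]

end Bernstein

theorem stmt_16_general {R : Type*} [Ring R] (B : ℤ → R)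
    (hrel : ∀ n m : ℤ, B n * B m = -(B (m - 1) * B (n + 1)))
    (l : ℕ) (p : Fin l → ℕ) (hp : Antitone p)
    (j : ℕ) (hj : j ≤ l) (n : ℤ)
    (hlow : (if h : j < l then (p ⟨j, h⟩ : ℤ) else 0) - (j : ℤ) ≤ n)
    (hup : ∀ h : 0 < j, n ≤ (p ⟨j - 1, lt_of_lt_of_le (Nat.sub_lt h one_pos) hj⟩ : ℤ) - (j : ℤ) - 1) :
    ∃ ν : Fin (l + 1) → ℤ,
      (∀ a : Fin (l + 1), ν a =
        if h : (a : ℕ) < j then (p ⟨a, lt_of_lt_of_le h hj⟩ : ℤ) - 1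
        else if (a : ℕ) = j then n + (j : ℤ)
        else if h2 : (a : ℕ) - 1 < l then (p ⟨(a : ℕ) - 1, h2⟩ : ℤ) else 0) ∧
      Antitone ν ∧ (∀ a, 0 ≤ ν a) ∧
      B n * (List.ofFn (fun a => B ((p a : ℤ)))).prod =
        (-1 : R) ^ j * (List.ofFn (fun a => B (ν a))).prod := by
  have hν : Antitone (shiftInsert (extendByZero p) j (n + j)) := by
    refine shiftInsert_antitone (extendByZero_antitone hp) (by unfold extendByZero; omega) ?_
    intro h
    rw [extendByZero_of_lt p (by omega)]
    linarith [hup h]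
  refine ⟨fun a => shiftInsert (extendByZero p) j (n + j) a, fun a => ?_, fun a b hab => hν hab,
    fun a => shiftInsert_nonneg (extendByZero_nonneg p) hν a, ?_⟩
  · simp only [shiftInsert, extendByZero]
    split_ifs <;> first | rfl | omega
  · have hp_eq : ∀ a : Fin l, (p a : ℤ) = extendByZero p a := fun a =>
      (extendByZero_of_lt p a.isLt).symm
    simp only [hp_eq]
    rw [List.ofFn_coe_eq_map_range (f := fun i => B (extendByZero p i)),
      List.ofFn_coe_eq_map_range (f := fun i => B (shiftInsert (extendByZero p) j (n + j) i))]
    exact bernstein_mul_prod_shiftInsert hrel _ hj n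

/-- let B_n satisfy B_n B_m = -B_{m-1} B_{n+1} and let λ be a
partition of length l.  If λ_{j+1} - j ≤ n ≤ λ_j - j - 1 for some j ∈ {0, …, l}
(conventions λ₀ = ∞, λ_{l+1} = 0), then
B_n B_{λ₁} ⋯ B_{λ_l} = (-1)^j B_{ν₁} ⋯ B_{ν_{l+1}} where
ν = (λ₁ - 1, …, λ_j - 1, n + j, λ_{j+1}, …, λ_l) = λ^{(n+j+1)} is a partition. -/
theorem stmt_16 {R : Type*} [Ring R] (B : ℤ → R)
    (hrel : ∀ n m : ℤ, B n * B m = -(B (m - 1) * B (n + 1)))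
    (l : ℕ) (p : Fin l → ℕ) (hp : Antitone p) (hpos : ∀ a, 1 ≤ p a)
    (j : ℕ) (hj : j ≤ l) (n : ℤ)
    (hlow : (if h : j < l then (p ⟨j, h⟩ : ℤ) else 0) - (j : ℤ) ≤ n)
    (hup : ∀ h : 0 < j, n ≤ (p ⟨j - 1, lt_of_lt_of_le (Nat.sub_lt h one_pos) hj⟩ : ℤ) - (j : ℤ) - 1) :
    ∃ ν : Fin (l + 1) → ℤ,
      (∀ a : Fin (l + 1), ν a =
        if h : (a : ℕ) < j then (p ⟨a, lt_of_lt_of_le h hj⟩ : ℤ) - 1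
        else if (a : ℕ) = j then n + (j : ℤ)
        else if h2 : (a : ℕ) - 1 < l then (p ⟨(a : ℕ) - 1, h2⟩ : ℤ) else 0) ∧
      Antitone ν ∧ (∀ a, 0 ≤ ν a) ∧
      B n * (List.ofFn (fun a => B ((p a : ℤ)))).prod =
        (-1 : R) ^ j * (List.ofFn (fun a => B (ν a))).prod :=
  stmt_16_general B hrel l p hp j hj n hlow hup
end
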